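/- (Theorem 3.5, Craig–Wayne Lemma in Sobolev regularity) Let s > 1/2, let n ≥ 1 be an integer, and let q ∈ H^s(𝕋) be real-valued with ‖q‖_s ≤ n/(2C_s). Let λ ∈ ℂ with |λ − n²| ≤ n/2, let u = u⁻·e_{−n} + u⁺·e_n with |u⁻| ≤ 1 and |u⁺| ≤ 1, set v := (Id − T_n)^{-1}T_n u ∈ 𝒬_n and f := u + v. Then for every m ∈ ℤ one has |(f, e_m)_{L²}| ≤ 2·⟨|m| − n⟩^{-s}. -/

import Mathlib

/-!
Split `u = u⁻ e_{-n} + u⁺ e_n`; by linearity it suffices to treat `e_p + Σ_k T_n^{k+1} e_p` for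
`p = ±n`. Measured in the norm `‖·‖_{s;-p}` adapted to `e_p`, the first term `T_n e_p` is bounded
directly by `(2/n)‖q‖_s ≤ 1/C_s ≤ 1/2`, and every later iterate lies in `𝒬_n`, so Lemma 3.2 gives
a further factor `C_s n⁻¹ ‖q‖_s ≤ 1/2` per step. Hence the `m`-th coefficient of the series is at
most `⟨m - p⟩^{-s} ≤ ⟨|m| - n⟩^{-s}`, and it vanishes for `|m| = n`, where only `e_p` contributes.
That `C_s ≥ 2` is forced by Lemma 3.2 itself, and that the iterates stay in `H^s` is the algebra
property of `H^s` for `s > 1/2` (Peetre's inequality plus Young's inequality `ℓ¹ ⋆ ℓ² ⊆ ℓ²`).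
-/

noncomputable section

/-- Japanese bracket `⟨m⟩ = max {1, |m|}`. -/
def jap (m : ℤ) : ℝ := max 1 |(m : ℝ)|

/-- Squared shifted Sobolev norm `‖u‖_{s;j}²` of a sequence of Fourier coefficients. -/
def shiftNormSq (s : ℝ) (j : ℤ) (u : ℤ → ℂ) : ℝ :=
  ∑' m : ℤ, jap (m + j) ^ (2 * s) * ‖u m‖ ^ 2

/-- Shifted Sobolev norm `‖u‖_{s;j}`. -/
def shiftNorm (s : ℝ) (j : ℤ) (u : ℤ → ℂ) : ℝ := Real.sqrt (shiftNormSq s j u)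

/-- Sobolev norm `‖u‖_s`. -/
def sobNorm (s : ℝ) (u : ℤ → ℂ) : ℝ := shiftNorm s 0 u

/-- Membership in `H^s(𝕋)`. -/
def memHs (s : ℝ) (u : ℤ → ℂ) : Prop :=
  Summable fun m : ℤ => jap m ^ (2 * s) * ‖u m‖ ^ 2

/-- Fourier coefficients of the product `q·w` (convolution). -/
def fconv (q w : ℤ → ℂ) (m : ℤ) : ℂ := ∑' k : ℤ, q k * w (m - k)

/-- The operator `T_n = T_n(q,λ)`. -/
def TnOp (q : ℤ → ℂ) (lam : ℂ) (n : ℕ) (w : ℤ → ℂ) : ℤ → ℂ := fun m =>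
  if |m| = (n : ℤ) then 0 else (lam - (m : ℂ) ^ 2)⁻¹ * fconv q w m

/-- Membership in `𝒬_n`. -/
def memQ (n : ℕ) (w : ℤ → ℂ) : Prop := w (n : ℤ) = 0 ∧ w (-(n : ℤ)) = 0

/-- The Neumann series `Σ_{k≥0} T_n^k w`. -/
def neumann (q : ℤ → ℂ) (lam : ℂ) (n : ℕ) (w : ℤ → ℂ) : ℤ → ℂ := fun m =>
  ∑' k : ℕ, (TnOp q lam n)^[k] w m

/-- The Fourier coefficients of the exponential `e_p`. -/
def efun (p : ℤ) : ℤ → ℂ := fun k => if k = p then 1 else 0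

open Filter

section CauchySchwarz

variable {ι : Type*} {r f g : ι → ℝ}

lemma abs_le_add_div_two_of_sq_le_mul {a b c : ℝ} (hb : 0 ≤ b) (hc : 0 ≤ c)
    (h : a ^ 2 ≤ b * c) : |a| ≤ (b + c) / 2 :=
  abs_le_of_sq_le_sq (by nlinarith [sq_nonneg (b - c)]) (by positivity)

lemma Summable.of_sq_le_mul (hf : Summable f) (hg : Summable g) (hf0 : ∀ i, 0 ≤ f i)
    (hg0 : ∀ i, 0 ≤ g i) (h : ∀ i, r i ^ 2 ≤ f i * g i) : Summable r :=
  Summable.of_norm_bounded ((hf.add hg).div_const 2) fun i =>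
    abs_le_add_div_two_of_sq_le_mul (hf0 i) (hg0 i) (h i)

lemma tsum_sq_le_tsum_mul_tsum (hf : Summable f) (hg : Summable g) (hf0 : ∀ i, 0 ≤ f i)
    (hg0 : ∀ i, 0 ≤ g i) (h : ∀ i, r i ^ 2 ≤ f i * g i) :
    (∑' i, r i) ^ 2 ≤ (∑' i, f i) * ∑' i, g i :=
  le_of_tendsto_of_tendsto' ((hf.of_sq_le_mul hg hf0 hg0 h).hasSum.pow 2)
    (Tendsto.mul hf.hasSum hg.hasSum) fun s =>
      Finset.sum_sq_le_sum_mul_sum_of_sq_le_mul s (fun i _ => hf0 i) (fun i _ => hg0 i)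
        fun i _ => h i

end CauchySchwarz

section Convolution

variable {G : Type*} [AddCommGroup G] {c d : G → ℝ}

lemma tsum_mul_sub_comm (c d : G → ℝ) (m : G) :
    ∑' k, c k * d (m - k) = ∑' k, d k * c (m - k) := by
  rw [← (Equiv.subLeft m).tsum_eq]
  simp only [Equiv.subLeft_apply, sub_sub_cancel, mul_comm]

lemma summable_mul_sub_comm_iff (c d : G → ℝ) (m : G) :
    (Summable fun k => c k * d (m - k)) ↔ Summable fun k => d k * c (m - k) := by
  rw [← (Equiv.subLeft m).summable_iff]
  simp only [Function.comp_def, Equiv.subLeft_apply, sub_sub_cancel, mul_comm]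

lemma summable_mul_sub_of_le (hc : Summable c) (hc0 : ∀ k, 0 ≤ c k) (hd0 : ∀ k, 0 ≤ d k)
    {C : ℝ} (hdC : ∀ j, d j ≤ C) (m : G) : Summable fun k => c k * d (m - k) :=
  Summable.of_nonneg_of_le (fun k => mul_nonneg (hc0 k) (hd0 _))
    (fun k => mul_le_mul_of_nonneg_left (hdC _) (hc0 k)) (hc.mul_right C)

lemma summable_tsum_mul_sub (hc : Summable c) (hd : Summable d) (hc0 : ∀ k, 0 ≤ c k)
    (hd0 : ∀ k, 0 ≤ d k) : Summable fun m => ∑' k, c k * d (m - k) := by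
  have hcd : Summable fun p : G × G => c p.1 * d p.2 :=
    hc.mul_of_nonneg hd (fun k => hc0 k) fun k => hd0 k
  let e : G × G ≃ G × G :=
    (Equiv.prodComm G G).trans (Equiv.prodShear (Equiv.refl G) Equiv.subRight)
  have hprod := (e.summable_iff (f := fun p => c p.1 * d p.2)).mpr hcd
  exact hprod.prod

/-- Young's inequality `ℓ¹ ⋆ ℓ² ⊆ ℓ²`. -/
lemma summable_sq_tsum_mul_sub (hc : Summable c) (hd : Summable fun k => d k ^ 2)
    (hc0 : ∀ k, 0 ≤ c k) : Summable fun m => (∑' k, c k * d (m - k)) ^ 2 := by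
  have hd2 : ∀ j, d j ^ 2 ≤ ∑' k, d k ^ 2 := fun j => hd.le_tsum j fun k _ => sq_nonneg (d k)
  refine Summable.of_nonneg_of_le (fun m => sq_nonneg _) (fun m => ?_)
    ((summable_tsum_mul_sub hc hd hc0 fun k => sq_nonneg (d k)).mul_left (∑' k, c k))
  exact tsum_sq_le_tsum_mul_tsum hc
    (summable_mul_sub_of_le hc hc0 (fun k => sq_nonneg (d k)) hd2 m) hc0
    (fun k => mul_nonneg (hc0 k) (sq_nonneg _)) fun k => le_of_eq (by ring)

end Convolution

lemma add_rpow_le_two_rpow_mul_rpow_add_rpow {x y s : ℝ} (hx : 0 ≤ x) (hy : 0 ≤ y)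
    (hs : 0 ≤ s) : (x + y) ^ s ≤ 2 ^ s * (x ^ s + y ^ s) := by
  wlog hxy : x ≤ y generalizing x y
  · simpa only [add_comm] using this hy hx (le_of_not_ge hxy)
  calc (x + y) ^ s ≤ (2 * y) ^ s := Real.rpow_le_rpow (by positivity) (by linarith) hs
    _ = 2 ^ s * y ^ s := Real.mul_rpow zero_le_two hy
    _ ≤ 2 ^ s * (x ^ s + y ^ s) := by
      gcongr
      exact le_add_of_nonneg_left (Real.rpow_nonneg hx s)

section Japanese

lemma one_le_jap (m : ℤ) : 1 ≤ jap m := le_max_left _ _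

lemma jap_pos (m : ℤ) : 0 < jap m := one_pos.trans_le (one_le_jap m)

lemma jap_rpow_pos (m : ℤ) (s : ℝ) : 0 < jap m ^ s := Real.rpow_pos_of_pos (jap_pos m) s

lemma jap_zero : jap 0 = 1 := by simp [jap]

lemma jap_le_jap {a b : ℤ} (h : |a| ≤ |b|) : jap a ≤ jap b :=
  max_le_max le_rfl (by simpa only [← Int.cast_abs] using Int.cast_le.mpr h)

lemma jap_add_le (a b : ℤ) : jap (a + b) ≤ jap a + jap b := by
  unfold jap
  push_cast
  exact max_le (by linarith [le_max_left 1 |(a : ℝ)|, le_max_left 1 |(b : ℝ)|])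
    ((abs_add_le _ _).trans (add_le_add (le_max_right _ _) (le_max_right _ _)))

lemma jap_add_le_two_mul (a b : ℤ) : jap (a + b) ≤ 2 * jap a * jap b := by
  nlinarith [jap_add_le a b, one_le_jap a, one_le_jap b]

lemma jap_add_rpow_le {s : ℝ} (hs : 0 ≤ s) (a b : ℤ) :
    jap (a + b) ^ s ≤ 2 ^ s * (jap a ^ s + jap b ^ s) :=
  (Real.rpow_le_rpow (jap_pos _).le (jap_add_le a b) hs).trans
    (add_rpow_le_two_rpow_mul_rpow_add_rpow (jap_pos a).le (jap_pos b).le hs)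

lemma jap_rpow_two_mul (m : ℤ) (s : ℝ) : jap m ^ (2 * s) = (jap m ^ s) ^ 2 := by
  rw [mul_comm, Real.rpow_mul (jap_pos m).le, Real.rpow_two]

lemma summable_jap_rpow {s : ℝ} (hs : 1 / 2 < s) : Summable fun m : ℤ => jap m ^ (-(2 * s)) := by
  refine Summable.of_nonneg_of_le (fun m => (jap_rpow_pos m _).le) (fun m => ?_)
    ((Real.summable_abs_int_rpow (b := 2 * s) (by linarith)).add
      (hasSum_ite_eq (0 : ℤ) (1 : ℝ)).summable)
  by_cases hm : m = 0
  · simp [hm, jap_zero, Real.zero_rpow (by linarith : -(2 * s) ≠ 0)]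
  · have hjap : jap m = |(m : ℝ)| :=
      max_eq_right (by simpa only [← Int.cast_abs, Int.cast_one] using
        (Int.cast_le (R := ℝ)).mpr (Int.one_le_abs hm))
    simp [hjap, hm]

end Japanese

section Weighted

variable {ι : Type*} {ω : ι → ℝ} {u v : ι → ℂ} {c : ℝ}

lemma weighted_sq_le_of_norm_le (hω : ∀ i, 0 ≤ ω i) (h : ∀ i, ‖u i‖ ≤ c * ‖v i‖) (i : ι) :
    ω i * ‖u i‖ ^ 2 ≤ c ^ 2 * (ω i * ‖v i‖ ^ 2) :=
  calc ω i * ‖u i‖ ^ 2 ≤ ω i * (c * ‖v i‖) ^ 2 :=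
        mul_le_mul_of_nonneg_left (pow_le_pow_left₀ (norm_nonneg _) (h i) 2) (hω i)
    _ = c ^ 2 * (ω i * ‖v i‖ ^ 2) := by ring

lemma Summable.weighted_sq_of_norm_le (hv : Summable fun i => ω i * ‖v i‖ ^ 2)
    (hω : ∀ i, 0 ≤ ω i) (h : ∀ i, ‖u i‖ ≤ c * ‖v i‖) : Summable fun i => ω i * ‖u i‖ ^ 2 :=
  Summable.of_nonneg_of_le (fun i => by have := hω i; positivity)
    (weighted_sq_le_of_norm_le hω h) (hv.mul_left _)

lemma tsum_weighted_sq_le_of_norm_le (hv : Summable fun i => ω i * ‖v i‖ ^ 2)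
    (hω : ∀ i, 0 ≤ ω i) (h : ∀ i, ‖u i‖ ≤ c * ‖v i‖) :
    ∑' i, ω i * ‖u i‖ ^ 2 ≤ c ^ 2 * ∑' i, ω i * ‖v i‖ ^ 2 := by
  rw [← tsum_mul_left]
  exact (hv.weighted_sq_of_norm_le hω h).tsum_le_tsum (weighted_sq_le_of_norm_le hω h)
    (hv.mul_left _)

end Weighted

section Sobolev

variable {s : ℝ} {q w : ℤ → ℂ}

lemma summable_norm_of_memHs (hs : 1 / 2 < s) (hw : memHs s w) : Summable fun k => ‖w k‖ :=
  (summable_jap_rpow hs).of_sq_le_mul hw (fun k => (jap_rpow_pos k _).le)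
    (fun k => mul_nonneg (jap_rpow_pos k _).le (sq_nonneg _)) fun k => by
      rw [← mul_assoc, ← Real.rpow_add (jap_pos k), neg_add_cancel, Real.rpow_zero, one_mul]

lemma memHs.summable_shift (hs : 0 ≤ s) (hw : memHs s w) (j : ℤ) :
    Summable fun m => jap (m + j) ^ (2 * s) * ‖w m‖ ^ 2 := by
  refine Summable.of_nonneg_of_le (fun m => mul_nonneg (jap_rpow_pos _ _).le (sq_nonneg _))
    (fun m => ?_) (hw.mul_left ((2 * jap j) ^ (2 * s)))
  calc jap (m + j) ^ (2 * s) * ‖w m‖ ^ 2 ≤ (2 * jap j * jap m) ^ (2 * s) * ‖w m‖ ^ 2 := by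
        gcongr
        · exact (jap_pos _).le
        · linarith [jap_add_le_two_mul m j]
    _ = (2 * jap j) ^ (2 * s) * (jap m ^ (2 * s) * ‖w m‖ ^ 2) := by
        rw [Real.mul_rpow (by linarith [jap_pos j]) (jap_pos m).le]
        ring

lemma jap_rpow_mul_norm_le_shiftNorm {j : ℤ}
    (hw : Summable fun m => jap (m + j) ^ (2 * s) * ‖w m‖ ^ 2) (m : ℤ) :
    jap (m + j) ^ s * ‖w m‖ ≤ shiftNorm s j w :=
  Real.le_sqrt_of_sq_le <| by
    rw [mul_pow, ← jap_rpow_two_mul]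
    exact hw.le_tsum m fun k _ => mul_nonneg (jap_rpow_pos _ _).le (sq_nonneg _)

lemma norm_le_shiftNorm {j : ℤ} (hw : Summable fun m => jap (m + j) ^ (2 * s) * ‖w m‖ ^ 2)
    (m : ℤ) : ‖w m‖ ≤ jap (m + j) ^ (-s) * shiftNorm s j w := by
  rw [Real.rpow_neg (jap_pos _).le, inv_mul_eq_div, le_div_iff₀ (jap_rpow_pos _ _), mul_comm]
  exact jap_rpow_mul_norm_le_shiftNorm hw m

lemma jap_rpow_mul_norm_le_sobNorm (hw : memHs s w) (m : ℤ) :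
    jap m ^ s * ‖w m‖ ≤ sobNorm s w := by
  simpa only [add_zero, sobNorm] using
    jap_rpow_mul_norm_le_shiftNorm (j := 0) (by simp only [add_zero]; exact hw) m

lemma summable_norm_mul_sub (hq : Summable fun k => ‖q k‖) (hw : Summable fun k => ‖w k‖)
    (m : ℤ) : Summable fun k => ‖q k‖ * ‖w (m - k)‖ :=
  summable_mul_sub_of_le (d := fun k => ‖w k‖) hq (fun _ => norm_nonneg _)
    (fun _ => norm_nonneg _) (fun j => hw.le_tsum j fun _ _ => norm_nonneg _) m

lemma summable_fconv_apply (hq : Summable fun k => ‖q k‖) (hw : Summable fun k => ‖w k‖)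
    (m : ℤ) : Summable fun k => q k * w (m - k) :=
  Summable.of_norm <| by simpa only [norm_mul] using summable_norm_mul_sub hq hw m

lemma jap_rpow_mul_norm_fconv_le (hs : 1 / 2 < s) (hq : memHs s q) (hw : memHs s w) (m : ℤ) :
    jap m ^ s * ‖fconv q w m‖ ≤
      2 ^ s * (∑' k, ‖w k‖ * (jap (m - k) ^ s * ‖q (m - k)‖) +
        ∑' k, ‖q k‖ * (jap (m - k) ^ s * ‖w (m - k)‖)) := by
  have hq1 := summable_norm_of_memHs hs hq
  have hw1 := summable_norm_of_memHs hs hw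
  have hqw := summable_norm_mul_sub hq1 hw1 m
  have hQw : Summable fun k => jap k ^ s * ‖q k‖ * ‖w (m - k)‖ :=
    (summable_mul_sub_comm_iff (fun k => jap k ^ s * ‖q k‖) (fun k => ‖w k‖) m).mpr <|
      summable_mul_sub_of_le hw1 (fun _ => norm_nonneg _)
        (fun _ => mul_nonneg (jap_rpow_pos _ _).le (norm_nonneg _))
        (jap_rpow_mul_norm_le_sobNorm hq) m
  have hqW : Summable fun k => ‖q k‖ * (jap (m - k) ^ s * ‖w (m - k)‖) :=
    summable_mul_sub_of_le (d := fun k => jap k ^ s * ‖w k‖) hq1 (fun _ => norm_nonneg _)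
      (fun _ => mul_nonneg (jap_rpow_pos _ _).le (norm_nonneg _))
      (jap_rpow_mul_norm_le_sobNorm hw) m
  have hweight : ∀ k, jap m ^ s ≤ 2 ^ s * (jap k ^ s + jap (m - k) ^ s) := fun k => by
    simpa only [add_sub_cancel] using jap_add_rpow_le (by linarith) k (m - k)
  calc jap m ^ s * ‖fconv q w m‖ ≤ jap m ^ s * ∑' k, ‖q k‖ * ‖w (m - k)‖ :=
        mul_le_mul_of_nonneg_left (tsum_of_norm_bounded hqw.hasSum fun k => (norm_mul _ _).le)
          (jap_rpow_pos m s).le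
    _ = ∑' k, jap m ^ s * (‖q k‖ * ‖w (m - k)‖) := tsum_mul_left.symm
    _ ≤ ∑' k, 2 ^ s * (jap k ^ s * ‖q k‖ * ‖w (m - k)‖ +
          ‖q k‖ * (jap (m - k) ^ s * ‖w (m - k)‖)) := by
        refine (hqw.mul_left _).tsum_le_tsum (fun k => ?_) ((hQw.add hqW).mul_left _)
        calc jap m ^ s * (‖q k‖ * ‖w (m - k)‖)
            ≤ 2 ^ s * (jap k ^ s + jap (m - k) ^ s) * (‖q k‖ * ‖w (m - k)‖) := by
              gcongr
              exact hweight k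
          _ = _ := by ring
    _ = _ := by
        rw [tsum_mul_left, hQw.tsum_add hqW,
          tsum_mul_sub_comm (fun k => jap k ^ s * ‖q k‖) fun k => ‖w k‖]

theorem memHs_fconv (hs : 1 / 2 < s) (hq : memHs s q) (hw : memHs s w) :
    memHs s (fconv q w) := by
  have hsq : ∀ u : ℤ → ℂ, memHs s u → Summable fun k => (jap k ^ s * ‖u k‖) ^ 2 :=
    fun u hu => hu.congr fun k => by rw [mul_pow, jap_rpow_two_mul]
  set P : ℤ → ℝ := fun m => ∑' k, ‖w k‖ * (jap (m - k) ^ s * ‖q (m - k)‖)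
  set Q : ℤ → ℝ := fun m => ∑' k, ‖q k‖ * (jap (m - k) ^ s * ‖w (m - k)‖)
  have hP : Summable fun m => P m ^ 2 :=
    summable_sq_tsum_mul_sub (d := fun k => jap k ^ s * ‖q k‖) (summable_norm_of_memHs hs hw)
      (hsq q hq) fun _ => norm_nonneg _
  have hQ : Summable fun m => Q m ^ 2 :=
    summable_sq_tsum_mul_sub (d := fun k => jap k ^ s * ‖w k‖) (summable_norm_of_memHs hs hq)
      (hsq w hw) fun _ => norm_nonneg _
  refine Summable.of_nonneg_of_le (fun m => mul_nonneg (jap_rpow_pos _ _).le (sq_nonneg _))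
    (fun m => ?_) ((hP.add hQ).mul_left (2 * (2 ^ s) ^ 2))
  calc jap m ^ (2 * s) * ‖fconv q w m‖ ^ 2 = (jap m ^ s * ‖fconv q w m‖) ^ 2 := by
        rw [jap_rpow_two_mul, mul_pow]
    _ ≤ (2 ^ s * (P m + Q m)) ^ 2 :=
        pow_le_pow_left₀ (mul_nonneg (jap_rpow_pos _ _).le (norm_nonneg _))
          (jap_rpow_mul_norm_fconv_le hs hq hw m) 2
    _ ≤ 2 * (2 ^ s) ^ 2 * (P m ^ 2 + Q m ^ 2) := by
        rw [mul_pow, mul_comm 2, mul_assoc]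
        gcongr
        nlinarith [sq_nonneg (P m - Q m)]

end Sobolev

section TnOp

variable {s : ℝ} {q : ℤ → ℂ} {lam : ℂ} {n : ℕ}

lemma fconv_efun (q : ℤ → ℂ) (p m : ℤ) : fconv q (efun p) m = q (m - p) := by
  rw [fconv, tsum_eq_single (m - p) fun k hk => by
    simp [efun, show m - k ≠ p from fun h => hk (by omega)]]
  simp [efun]

lemma fconv_add_smul (hq : Summable fun k => ‖q k‖) {A B : ℤ → ℂ}
    (hA : Summable fun k => ‖A k‖) (hB : Summable fun k => ‖B k‖) (a b : ℂ) (m : ℤ) :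
    fconv q (a • A + b • B) m = a * fconv q A m + b * fconv q B m := by
  simp only [fconv, Pi.add_apply, Pi.smul_apply, smul_eq_mul, mul_add, mul_left_comm (q _)]
  rw [((summable_fconv_apply hq hA m).mul_left a).tsum_add
    ((summable_fconv_apply hq hB m).mul_left b), tsum_mul_left, tsum_mul_left]

lemma memHs_efun (s : ℝ) (p : ℤ) : memHs s (efun p) :=
  (hasSum_ite_eq p (jap p ^ (2 * s))).summable.congr fun m => by
    by_cases h : m = p <;> simp [efun, h]

lemma shiftNorm_smul_efun (s : ℝ) (j : ℤ) (c : ℂ) (p : ℤ) :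
    shiftNorm s j (c • efun p) = jap (p + j) ^ s * ‖c‖ := by
  rw [shiftNorm, shiftNormSq, tsum_eq_single p fun m hm => by simp [efun, hm],
    ← Real.sqrt_sq (mul_nonneg (jap_rpow_pos _ _).le (norm_nonneg c))]
  simp [efun, mul_pow, jap_rpow_two_mul]

lemma half_le_norm_sub_sq (hlam : ‖lam - (n : ℂ) ^ 2‖ ≤ (n : ℝ) / 2) {m : ℤ}
    (hm : |m| ≠ n) : (n : ℝ) / 2 ≤ ‖lam - (m : ℂ) ^ 2‖ := by
  have hgap : (n : ℤ) ≤ |(n : ℤ) ^ 2 - m ^ 2| := by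
    rw [← sq_abs m]
    rcases hm.lt_or_gt with h | h
    · exact le_abs.mpr (Or.inl (by nlinarith [abs_nonneg m]))
    · exact le_abs.mpr (Or.inr (by nlinarith [abs_nonneg m]))
  have hgapC : (n : ℝ) ≤ ‖(n : ℂ) ^ 2 - (m : ℂ) ^ 2‖ := by
    rw [show (n : ℂ) ^ 2 - (m : ℂ) ^ 2 = (((n : ℤ) ^ 2 - m ^ 2 : ℤ) : ℂ) by push_cast; ring,
      Complex.norm_intCast, ← Int.cast_abs]
    exact_mod_cast hgap
  have := norm_sub_le_norm_sub_add_norm_sub ((n : ℂ) ^ 2) lam ((m : ℂ) ^ 2)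
  rw [norm_sub_rev _ lam] at this
  linarith

lemma TnOp_apply_of_abs_eq (w : ℤ → ℂ) {m : ℤ} (hm : |m| = n) : TnOp q lam n w m = 0 :=
  if_pos hm

lemma norm_TnOp_apply_le (hn : 1 ≤ n) (hlam : ‖lam - (n : ℂ) ^ 2‖ ≤ (n : ℝ) / 2)
    (w : ℤ → ℂ) (m : ℤ) : ‖TnOp q lam n w m‖ ≤ 2 / n * ‖fconv q w m‖ := by
  unfold TnOp
  split_ifs with hm
  · simp only [norm_zero]
    positivity
  · have hn0 : (0 : ℝ) < n := Nat.cast_pos.mpr hn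
    rw [norm_mul, norm_inv, ← inv_div]
    exact mul_le_mul_of_nonneg_right (inv_anti₀ (by positivity) (half_le_norm_sub_sq hlam hm))
      (norm_nonneg _)

lemma shiftNorm_TnOp_efun_le (hn : 1 ≤ n) (hlam : ‖lam - (n : ℂ) ^ 2‖ ≤ (n : ℝ) / 2)
    (hq : memHs s q) (p : ℤ) : shiftNorm s (-p) (TnOp q lam n (efun p)) ≤ 2 / n * sobNorm s q := by
  have hn0 : (0 : ℝ) < n := Nat.cast_pos.mpr hn
  rw [sobNorm, shiftNorm, shiftNorm, ← Real.sqrt_sq (by positivity : (0 : ℝ) ≤ 2 / n),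
    ← Real.sqrt_mul (sq_nonneg _)]
  refine Real.sqrt_le_sqrt ?_
  have hshift : shiftNormSq s 0 q = ∑' m, jap (m + -p) ^ (2 * s) * ‖q (m - p)‖ ^ 2 := by
    simp only [shiftNormSq, add_zero, ← sub_eq_add_neg]
    exact ((Equiv.subRight p).tsum_eq fun k => jap k ^ (2 * s) * ‖q k‖ ^ 2).symm
  rw [hshift]
  refine tsum_weighted_sq_le_of_norm_le ?_ (fun m => (jap_rpow_pos _ _).le)
    fun m => by simpa only [fconv_efun] using norm_TnOp_apply_le hn hlam (efun p) m
  simp only [← sub_eq_add_neg]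
  exact (Equiv.subRight p).summable_iff.mpr hq

lemma memQ_TnOp (q : ℤ → ℂ) (lam : ℂ) (n : ℕ) (w : ℤ → ℂ) : memQ n (TnOp q lam n w) :=
  ⟨TnOp_apply_of_abs_eq w (abs_of_nonneg (Int.natCast_nonneg n)),
    TnOp_apply_of_abs_eq w (by simp)⟩

lemma memQ_iterate_TnOp (k : ℕ) (w : ℤ → ℂ) :
    memQ n ((TnOp q lam n)^[k] (TnOp q lam n w)) := by
  rw [← Function.iterate_succ_apply, Function.iterate_succ_apply']
  exact memQ_TnOp q lam n _

lemma memHs_TnOp (hs : 1 / 2 < s) (hn : 1 ≤ n) (hlam : ‖lam - (n : ℂ) ^ 2‖ ≤ (n : ℝ) / 2)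
    (hq : memHs s q) {w : ℤ → ℂ} (hw : memHs s w) : memHs s (TnOp q lam n w) :=
  Summable.weighted_sq_of_norm_le (memHs_fconv hs hq hw) (fun m => (jap_rpow_pos m _).le)
    (norm_TnOp_apply_le hn hlam w)

lemma memHs_iterate_TnOp (hs : 1 / 2 < s) (hn : 1 ≤ n)
    (hlam : ‖lam - (n : ℂ) ^ 2‖ ≤ (n : ℝ) / 2) (hq : memHs s q) {w : ℤ → ℂ} (hw : memHs s w)
    (k : ℕ) : memHs s ((TnOp q lam n)^[k] w) := by
  induction k with
  | zero => exact hw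
  | succ k ih =>
    rw [Function.iterate_succ_apply']
    exact memHs_TnOp hs hn hlam hq ih

lemma TnOp_add_smul (hs : 1 / 2 < s) (hq : memHs s q) {A B : ℤ → ℂ} (hA : memHs s A)
    (hB : memHs s B) (a b : ℂ) :
    TnOp q lam n (a • A + b • B) = a • TnOp q lam n A + b • TnOp q lam n B := by
  funext m
  simp only [TnOp, Pi.add_apply, Pi.smul_apply, smul_eq_mul]
  split_ifs
  · simp
  · rw [fconv_add_smul (summable_norm_of_memHs hs hq) (summable_norm_of_memHs hs hA)
      (summable_norm_of_memHs hs hB)]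
    ring

lemma iterate_TnOp_add_smul (hs : 1 / 2 < s) (hn : 1 ≤ n)
    (hlam : ‖lam - (n : ℂ) ^ 2‖ ≤ (n : ℝ) / 2) (hq : memHs s q) {A B : ℤ → ℂ}
    (hA : memHs s A) (hB : memHs s B) (a b : ℂ) (k : ℕ) :
    (TnOp q lam n)^[k] (a • A + b • B) =
      a • (TnOp q lam n)^[k] A + b • (TnOp q lam n)^[k] B := by
  induction k with
  | zero => rfl
  | succ k ih =>
    rw [Function.iterate_succ_apply', ih, TnOp_add_smul hs hq
      (memHs_iterate_TnOp hs hn hlam hq hA k) (memHs_iterate_TnOp hs hn hlam hq hB k),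
      Function.iterate_succ_apply', Function.iterate_succ_apply']

lemma neumann_add_smul (hs : 1 / 2 < s) (hn : 1 ≤ n)
    (hlam : ‖lam - (n : ℂ) ^ 2‖ ≤ (n : ℝ) / 2) (hq : memHs s q) {A B : ℤ → ℂ}
    (hA : memHs s A) (hB : memHs s B) (a b : ℂ) {m : ℤ}
    (hAm : Summable fun k => (TnOp q lam n)^[k] A m)
    (hBm : Summable fun k => (TnOp q lam n)^[k] B m) :
    neumann q lam n (a • A + b • B) m = a * neumann q lam n A m + b * neumann q lam n B m := by
  simp only [neumann, iterate_TnOp_add_smul hs hn hlam hq hA hB, Pi.add_apply, Pi.smul_apply,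
    smul_eq_mul]
  rw [(hAm.mul_left a).tsum_add (hBm.mul_left b), tsum_mul_left, tsum_mul_left]

lemma neumann_TnOp_apply_of_abs_eq (w : ℤ → ℂ) {m : ℤ} (hm : |m| = n) :
    neumann q lam n (TnOp q lam n w) m = 0 := by
  simp only [neumann, ← Function.iterate_succ_apply, Function.iterate_succ_apply',
    TnOp_apply_of_abs_eq _ hm, tsum_zero]

end TnOp

/-- The estimate of Lemma 3.2 with constant `Cs`. -/
def TnOpBound (s Cs : ℝ) : Prop :=
  ∀ (q : ℤ → ℂ) (n : ℕ) (lam : ℂ) (j : ℤ) (w : ℤ → ℂ),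
    1 ≤ n → memHs s q → ‖lam - (n : ℂ) ^ 2‖ ≤ (n : ℝ) / 2 → memQ n w → memHs s w →
    shiftNorm s j (TnOp q lam n w) ≤ Cs * (n : ℝ)⁻¹ * sobNorm s q * shiftNorm s j w

/-- Test the estimate on `q = w = e₀`, `n = 1`, `λ = 1/2`, where `T₁ e₀ = 2 e₀`. -/
lemma TnOpBound.two_le {s Cs : ℝ} (hC : TnOpBound s Cs) : 2 ≤ Cs := by
  have hT : TnOp (efun 0) (1 / 2) 1 (efun 0) = (2 : ℂ) • efun 0 := by
    funext m
    by_cases hm : m = 0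
    · subst hm
      norm_num [TnOp, fconv_efun, efun]
    · simp [TnOp, fconv_efun, efun, hm]
  have h := hC (efun 0) 1 (1 / 2) 0 (efun 0) le_rfl (memHs_efun s 0) (by norm_num)
    ⟨by simp [efun], by simp [efun]⟩ (memHs_efun s 0)
  have he : shiftNorm s 0 (efun 0) = 1 := by
    simpa [jap_zero] using shiftNorm_smul_efun s 0 1 0
  rw [hT, shiftNorm_smul_efun, sobNorm, he] at h
  norm_num [jap_zero] at h
  exact h

section CraigWayne

variable {s Cs : ℝ} {q : ℤ → ℂ} {lam : ℂ} {n : ℕ}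

lemma shiftNorm_iterate_TnOp_efun_le (hs : 1 / 2 < s) (hC : TnOpBound s Cs) (hn : 1 ≤ n)
    (hq : memHs s q) (hqsmall : sobNorm s q ≤ (n : ℝ) / (2 * Cs))
    (hlam : ‖lam - (n : ℂ) ^ 2‖ ≤ (n : ℝ) / 2) (p : ℤ) (k : ℕ) :
    shiftNorm s (-p) ((TnOp q lam n)^[k] (TnOp q lam n (efun p))) ≤ (1 / 2) ^ (k + 1) := by
  have hn0 : (0 : ℝ) < n := Nat.cast_pos.mpr hn
  have hC2 := hC.two_le
  have hsmall : 2 * Cs * sobNorm s q ≤ n := by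
    rwa [le_div_iff₀ (by positivity), mul_comm] at hqsmall
  have hq0 : 0 ≤ sobNorm s q := Real.sqrt_nonneg _
  induction k with
  | zero =>
    calc shiftNorm s (-p) (TnOp q lam n (efun p)) ≤ 2 / n * sobNorm s q :=
          shiftNorm_TnOp_efun_le hn hlam hq p
      _ ≤ (1 / 2) ^ (0 + 1) := by
          rw [div_mul_eq_mul_div, div_le_iff₀ hn0]
          nlinarith
  | succ k ih =>
    rw [Function.iterate_succ_apply']
    calc _ ≤ Cs * (n : ℝ)⁻¹ * sobNorm s q *
          shiftNorm s (-p) ((TnOp q lam n)^[k] (TnOp q lam n (efun p))) :=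
          hC q n lam (-p) _ hn hq hlam (memQ_iterate_TnOp k _)
            (memHs_iterate_TnOp hs hn hlam hq (memHs_TnOp hs hn hlam hq (memHs_efun s p)) k)
      _ ≤ 1 / 2 * (1 / 2) ^ (k + 1) := by
          refine mul_le_mul ?_ ih (Real.sqrt_nonneg _) one_half_pos.le
          rw [mul_right_comm, mul_inv_le_iff₀ hn0]
          linarith
      _ = (1 / 2) ^ (k + 1 + 1) := by ring

lemma norm_iterate_TnOp_efun_le (hs : 1 / 2 < s) (hC : TnOpBound s Cs) (hn : 1 ≤ n)
    (hq : memHs s q) (hqsmall : sobNorm s q ≤ (n : ℝ) / (2 * Cs))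
    (hlam : ‖lam - (n : ℂ) ^ 2‖ ≤ (n : ℝ) / 2) (p m : ℤ) (k : ℕ) :
    ‖(TnOp q lam n)^[k] (TnOp q lam n (efun p)) m‖ ≤ jap (m - p) ^ (-s) / 2 * (1 / 2) ^ k := by
  have hw := memHs_iterate_TnOp hs hn hlam hq (memHs_TnOp hs hn hlam hq (memHs_efun s p)) k
  calc _ ≤ jap (m + -p) ^ (-s) * shiftNorm s (-p) ((TnOp q lam n)^[k] (TnOp q lam n (efun p))) :=
        norm_le_shiftNorm (hw.summable_shift (by linarith) (-p)) m
    _ ≤ jap (m - p) ^ (-s) * (1 / 2) ^ (k + 1) := by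
        rw [← sub_eq_add_neg]
        gcongr
        · exact (jap_rpow_pos _ _).le
        · exact shiftNorm_iterate_TnOp_efun_le hs hC hn hq hqsmall hlam p k
    _ = _ := by ring

lemma summable_iterate_TnOp_efun (hs : 1 / 2 < s) (hC : TnOpBound s Cs) (hn : 1 ≤ n)
    (hq : memHs s q) (hqsmall : sobNorm s q ≤ (n : ℝ) / (2 * Cs))
    (hlam : ‖lam - (n : ℂ) ^ 2‖ ≤ (n : ℝ) / 2) (p m : ℤ) :
    Summable fun k => (TnOp q lam n)^[k] (TnOp q lam n (efun p)) m :=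
  Summable.of_norm_bounded (hasSum_geometric_two.mul_left _).summable
    (norm_iterate_TnOp_efun_le hs hC hn hq hqsmall hlam p m)

lemma norm_neumann_TnOp_efun_le (hs : 1 / 2 < s) (hC : TnOpBound s Cs) (hn : 1 ≤ n)
    (hq : memHs s q) (hqsmall : sobNorm s q ≤ (n : ℝ) / (2 * Cs))
    (hlam : ‖lam - (n : ℂ) ^ 2‖ ≤ (n : ℝ) / 2) (p m : ℤ) :
    ‖neumann q lam n (TnOp q lam n (efun p)) m‖ ≤ jap (m - p) ^ (-s) := by
  have h := tsum_of_norm_bounded (hasSum_geometric_two.mul_left (jap (m - p) ^ (-s) / 2))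
    (norm_iterate_TnOp_efun_le hs hC hn hq hqsmall hlam p m)
  rwa [div_mul_cancel₀ _ two_ne_zero] at h

lemma norm_efun_add_neumann_le (hs : 1 / 2 < s) (hC : TnOpBound s Cs) (hn : 1 ≤ n)
    (hq : memHs s q) (hqsmall : sobNorm s q ≤ (n : ℝ) / (2 * Cs))
    (hlam : ‖lam - (n : ℂ) ^ 2‖ ≤ (n : ℝ) / 2) {p : ℤ} (hp : |p| = n) (m : ℤ) :
    ‖(efun p + neumann q lam n (TnOp q lam n (efun p))) m‖ ≤ jap (|m| - n) ^ (-s) := by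
  rw [Pi.add_apply]
  by_cases hm : |m| = n
  · rw [neumann_TnOp_apply_of_abs_eq _ hm, add_zero, hm, sub_self, jap_zero, Real.one_rpow]
    unfold efun
    split_ifs <;> simp
  · rw [show efun p m = 0 from if_neg fun h : m = p => hm (h ▸ hp), zero_add]
    refine (norm_neumann_TnOp_efun_le hs hC hn hq hqsmall hlam p m).trans
      (Real.rpow_le_rpow_of_nonpos (jap_pos _) (jap_le_jap ?_) (by linarith))
    simpa only [hp, abs_abs] using abs_abs_sub_abs_le_abs_sub m p

lemma add_neumann_TnOp_smul_efun_apply (hs : 1 / 2 < s) (hC : TnOpBound s Cs) (hn : 1 ≤ n)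
    (hq : memHs s q) (hqsmall : sobNorm s q ≤ (n : ℝ) / (2 * Cs))
    (hlam : ‖lam - (n : ℂ) ^ 2‖ ≤ (n : ℝ) / 2) (a b : ℂ) (p p' m : ℤ) :
    (a • efun p + b • efun p' + neumann q lam n (TnOp q lam n (a • efun p + b • efun p'))) m =
      a * (efun p + neumann q lam n (TnOp q lam n (efun p))) m +
        b * (efun p' + neumann q lam n (TnOp q lam n (efun p'))) m := by
  rw [Pi.add_apply, TnOp_add_smul hs hq (memHs_efun s _) (memHs_efun s _),
    neumann_add_smul hs hn hlam hq (memHs_TnOp hs hn hlam hq (memHs_efun s p))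
      (memHs_TnOp hs hn hlam hq (memHs_efun s p')) a b
      (summable_iterate_TnOp_efun hs hC hn hq hqsmall hlam p m)
      (summable_iterate_TnOp_efun hs hC hn hq hqsmall hlam p' m)]
  simp only [Pi.add_apply, Pi.smul_apply, smul_eq_mul]
  ring

end CraigWayne

theorem theorem_3_5_general (s : ℝ) (hs : 1 / 2 < s) (Cs : ℝ)
    (hbound : ∀ (q : ℤ → ℂ) (n : ℕ) (lam : ℂ) (j : ℤ) (w : ℤ → ℂ),
      1 ≤ n → memHs s q →
      ‖lam - (n : ℂ) ^ 2‖ ≤ (n : ℝ) / 2 →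
      memQ n w → memHs s w →
      shiftNorm s j (TnOp q lam n w) ≤ Cs * (n : ℝ)⁻¹ * sobNorm s q * shiftNorm s j w)
    (q : ℤ → ℂ)
    (n : ℕ) (hn : 1 ≤ n) (hq : memHs s q)
    (hqsmall : sobNorm s q ≤ (n : ℝ) / (2 * Cs))
    (lam : ℂ) (hlam : ‖lam - (n : ℂ) ^ 2‖ ≤ (n : ℝ) / 2)
    (um up : ℂ) (hum : ‖um‖ ≤ 1) (hup : ‖up‖ ≤ 1) :
    ∀ m : ℤ,
      ‖(um • efun (-(n : ℤ)) + up • efun (n : ℤ) +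
            neumann q lam n (TnOp q lam n (um • efun (-(n : ℤ)) + up • efun (n : ℤ)))) m‖
        ≤ 2 * jap (|m| - (n : ℤ)) ^ (-s) := by
  intro m
  have hmode : ∀ p : ℤ, |p| = n →
      ‖(efun p + neumann q lam n (TnOp q lam n (efun p))) m‖ ≤ jap (|m| - n) ^ (-s) :=
    fun p hp => norm_efun_add_neumann_le hs hbound hn hq hqsmall hlam hp m
  rw [add_neumann_TnOp_smul_efun_apply hs hbound hn hq hqsmall hlam, two_mul]
  refine (norm_add_le _ _).trans (add_le_add ?_ ?_) <;> rw [norm_mul]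
  · exact (mul_le_of_le_one_left (norm_nonneg _) hum).trans (hmode _ (by simp))
  · exact (mul_le_of_le_one_left (norm_nonneg _) hup).trans (hmode _ (by simp))

/-- **Theorem 3.5 (Craig–Wayne Lemma in Sobolev regularity).**
For `u = u⁻ e_{−n} + u⁺ e_n` with `|u⁻|, |u⁺| ≤ 1`, `v := (Id − T_n)^{-1} T_n u` and
`f := u + v`, one has `|(f, e_m)_{L²}| ≤ 2 ⟨|m| − n⟩^{-s}` for every `m ∈ ℤ`. -/
theorem theorem_3_5 (s : ℝ) (hs : 1 / 2 < s) (Cs : ℝ) (hCs : 0 < Cs)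
    (hbound : ∀ (q : ℤ → ℂ) (n : ℕ) (lam : ℂ) (j : ℤ) (w : ℤ → ℂ),
      1 ≤ n → memHs s q →
      ‖lam - (n : ℂ) ^ 2‖ ≤ (n : ℝ) / 2 →
      memQ n w → memHs s w →
      shiftNorm s j (TnOp q lam n w) ≤ Cs * (n : ℝ)⁻¹ * sobNorm s q * shiftNorm s j w)
    (q : ℤ → ℂ) (hqreal : ∀ k : ℤ, q (-k) = (starRingEnd ℂ) (q k))
    (n : ℕ) (hn : 1 ≤ n) (hq : memHs s q)
    (hqsmall : sobNorm s q ≤ (n : ℝ) / (2 * Cs))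
    (lam : ℂ) (hlam : ‖lam - (n : ℂ) ^ 2‖ ≤ (n : ℝ) / 2)
    (um up : ℂ) (hum : ‖um‖ ≤ 1) (hup : ‖up‖ ≤ 1) :
    ∀ m : ℤ,
      ‖(um • efun (-(n : ℤ)) + up • efun (n : ℤ) +
            neumann q lam n (TnOp q lam n (um • efun (-(n : ℤ)) + up • efun (n : ℤ)))) m‖
        ≤ 2 * jap (|m| - (n : ℤ)) ^ (-s) :=
  theorem_3_5_general s hs Cs hbound q n hn hq hqsmall lam hlam um up hum hup
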